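/- arXiv:1305.0716 — 2 statements merged into one kernel-verified Lean document; each statement's English description precedes it below -/
import Mathlib

section
/- Let {T_j}_{j=1}^n ⊂ K^{d×r} be a generalized frame with frame operator S. For any Parseval generalized frame {R_j}_{j=1}^n ⊂ K^{d×r}, one has Σ_j ‖T_j − S^{-1/2}T_j‖²_HS ≤ Σ_j ‖T_j − R_j‖²_HS, with equality if and only if R_j = S^{-1/2}T_j for all j. -/
/-!
Stack the family into its synthesis matrix `X = [T₁ ⋯ Tₙ]`: then `S = X Xᴴ`, a Parseval family
is a `Y` with `Y Yᴴ = 1`, and the summed Hilbert–Schmidt distance is `‖X - Y‖²`. The matrix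
`U = S^{-1/2} X` is Parseval too, and since `U Uᴴ = Y Yᴴ`, expanding traces of `X = S^{1/2} U`
gives the Pythagorean identity `‖X - Y‖² = ‖X - U‖² + ‖B (Y - U)‖²` for any `B` with
`Bᴴ B = S^{1/2}`. Such a `B` is invertible, so the last term vanishes only when `Y = U`.
-/

open scoped ComplexOrder
open Matrix

namespace Matrix

section Synthesis

variable {α : Type*} {m k ι : Type*}

/-- The block row `[T₁ ⋯ Tₙ]`, i.e. the synthesis operator of the family. -/
def synthesisMatrix (T : ι → Matrix m k α) : Matrix m (ι × k) α :=
  of fun i p => T p.1 i p.2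

theorem synthesisMatrix_injective :
    Function.Injective (synthesisMatrix : (ι → Matrix m k α) → Matrix m (ι × k) α) :=
  fun _ _ h => funext fun j => funext fun i => funext fun l => congrFun (congrFun h i) (j, l)

theorem synthesisMatrix_sub [Sub α] (T T' : ι → Matrix m k α) :
    synthesisMatrix (fun j => T j - T' j) = synthesisMatrix T - synthesisMatrix T' :=
  rfl

theorem mul_synthesisMatrix [NonUnitalNonAssocSemiring α] [Fintype m] (Q : Matrix m m α)
    (T : ι → Matrix m k α) : Q * synthesisMatrix T = synthesisMatrix fun j => Q * T j := by
  ext i p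
  simp [synthesisMatrix, mul_apply]

theorem synthesisMatrix_mul_conjTranspose [NonUnitalNonAssocSemiring α] [Star α] [Fintype ι]
    [Fintype k] (T : ι → Matrix m k α) :
    synthesisMatrix T * (synthesisMatrix T)ᴴ = ∑ j, T j * (T j)ᴴ := by
  ext i i'
  simp [synthesisMatrix, mul_apply, Fintype.sum_prod_type, Matrix.sum_apply]

end Synthesis

theorem trace_sub_mul_conjTranspose_sub_eq {R : Type*} [CommRing R] [StarRing R] {m k : Type*}
    [Fintype m] [Fintype k] {A : Matrix m m R} (hA : Aᴴ = A) {U Y : Matrix m k R}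
    (hUY : U * Uᴴ = Y * Yᴴ) :
    ((A * U - Y) * (A * U - Y)ᴴ).trace =
      ((A * U - U) * (A * U - U)ᴴ).trace + (A * ((Y - U) * (Y - U)ᴴ)).trace := by
  have h1 : (Y * (Uᴴ * A)).trace = (A * (Y * Uᴴ)).trace := by
    rw [← Matrix.mul_assoc, trace_mul_comm]
  have h2 : (U * (Uᴴ * A)).trace = (A * (Y * Yᴴ)).trace := by
    rw [← Matrix.mul_assoc, hUY, trace_mul_comm]
  have h3 : (U * Uᴴ).trace = (Y * Yᴴ).trace := by rw [hUY]
  simp only [conjTranspose_sub, conjTranspose_mul, hA, Matrix.sub_mul, Matrix.mul_sub, trace_sub,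
    Matrix.mul_assoc]
  linear_combination h2 - h1 - h3

variable {𝕜 : Type*} [RCLike 𝕜] {m k : Type*} [Fintype m] [Fintype k]

def hsNormSq (M : Matrix m k 𝕜) : ℝ :=
  ∑ i, ∑ l, ‖M i l‖ ^ 2

theorem ofReal_hsNormSq (M : Matrix m k 𝕜) : (hsNormSq M : 𝕜) = (M * Mᴴ).trace := by
  simp [hsNormSq, trace, mul_apply, RCLike.mul_conj]

theorem hsNormSq_nonneg (M : Matrix m k 𝕜) : 0 ≤ hsNormSq M := by
  unfold hsNormSq
  positivity

theorem hsNormSq_eq_zero_iff {M : Matrix m k 𝕜} : hsNormSq M = 0 ↔ M = 0 := by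
  rw [← RCLike.ofReal_eq_zero (K := 𝕜), ofReal_hsNormSq, trace_mul_conjTranspose_self_eq_zero_iff]

theorem hsNormSq_synthesisMatrix {ι : Type*} [Fintype ι] (T : ι → Matrix m k 𝕜) :
    hsNormSq (synthesisMatrix T) = ∑ j, hsNormSq (T j) := by
  simp only [hsNormSq, synthesisMatrix, of_apply, Fintype.sum_prod_type]
  exact Finset.sum_comm

variable [DecidableEq m]

theorem isUnit_mul_conjTranspose_of_lower_bound {X : Matrix m k 𝕜} {A : ℝ} (hA : 0 < A)
    (h : ∀ x : m → 𝕜, A * ∑ i, ‖x i‖ ^ 2 ≤ ∑ p, ‖(Xᴴ *ᵥ x) p‖ ^ 2) :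
    IsUnit (X * Xᴴ) := by
  rw [← mulVec_injective_iff_isUnit]
  refine (injective_iff_map_eq_zero (X * Xᴴ).mulVecLin).mpr fun x hx => ?_
  have hXx : Xᴴ *ᵥ x = 0 := by
    simpa using (conjTranspose_mul_self_mulVec_eq_zero Xᴴ x).mp (by simpa using hx)
  have hle : ∑ i, ‖x i‖ ^ 2 ≤ 0 := nonpos_of_mul_nonpos_right (by simpa [hXx] using h x) hA
  simpa [Finset.sum_eq_zero_iff_of_nonneg, funext_iff] using le_antisymm hle (by positivity)

theorem isUnit_det_of_mul_mul_conjTranspose_eq_one {X : Matrix m k 𝕜} {Q : Matrix m m 𝕜}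
    (hQX : Q * X * (Q * X)ᴴ = 1) : IsUnit Q.det :=
  (isUnit_iff_isUnit_det Q).mp <| .of_mul_eq_one (X * (Q * X)ᴴ) (by rw [← Matrix.mul_assoc, hQX])

theorem mul_mul_conjTranspose_eq_one_of_mul_self_eq_inv {X : Matrix m k 𝕜} {Q : Matrix m m 𝕜}
    (hQ : Qᴴ = Q) (hS : IsUnit (X * Xᴴ).det) (hQsq : Q * Q = (X * Xᴴ)⁻¹) :
    Q * X * (Q * X)ᴴ = 1 := by
  have hQQS : Q * (Q * (X * Xᴴ)) = 1 := by
    rw [← Matrix.mul_assoc, hQsq, nonsing_inv_mul _ hS]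
  rw [conjTranspose_mul, hQ, ← mul_eq_one_comm.mp hQQS]
  simp only [Matrix.mul_assoc]

theorem hsNormSq_sub_eq_add_hsNormSq_mul {X Y : Matrix m k 𝕜} {Q B : Matrix m m 𝕜} (hQ : Qᴴ = Q)
    (hB : Bᴴ * B = Q⁻¹) (hQX : Q * X * (Q * X)ᴴ = 1) (hY : Y * Yᴴ = 1) :
    hsNormSq (X - Y) = hsNormSq (X - Q * X) + hsNormSq (B * (Y - Q * X)) := by
  have key := trace_sub_mul_conjTranspose_sub_eq (A := Q⁻¹)
    (by rw [conjTranspose_nonsing_inv, hQ]) (hQX.trans hY.symm)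
  rw [nonsing_inv_mul_cancel_left _ _ (isUnit_det_of_mul_mul_conjTranspose_eq_one hQX), ← hB]
    at key
  apply RCLike.ofReal_injective (K := 𝕜)
  simp only [RCLike.ofReal_add, ofReal_hsNormSq]
  rw [key, conjTranspose_mul, Matrix.mul_assoc, trace_mul_comm Bᴴ]
  simp only [Matrix.mul_assoc]

theorem hsNormSq_sub_mul_le_and_eq_iff {X Y : Matrix m k 𝕜} {Q : Matrix m m 𝕜}
    (hQ : Q.PosSemidef) (hQX : Q * X * (Q * X)ᴴ = 1) (hY : Y * Yᴴ = 1) :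
    hsNormSq (X - Q * X) ≤ hsNormSq (X - Y) ∧
      (hsNormSq (X - Q * X) = hsNormSq (X - Y) ↔ Y = Q * X) := by
  obtain ⟨B, hB⟩ : ∃ B : Matrix m m 𝕜, Q⁻¹ = Bᴴ * B := by
    open scoped MatrixOrder in
    exact CStarAlgebra.nonneg_iff_eq_star_mul_self.mp hQ.inv.nonneg
  rw [hsNormSq_sub_eq_add_hsNormSq_mul hQ.1 hB.symm hQX hY]
  refine ⟨le_add_of_nonneg_right (hsNormSq_nonneg _), ?_⟩
  rw [left_eq_add, hsNormSq_eq_zero_iff]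
  refine ⟨fun h => ?_, fun h => by rw [h, sub_self, Matrix.mul_zero]⟩
  rw [← sub_eq_zero]
  calc Y - Q * X = Q * (Bᴴ * (B * (Y - Q * X))) := by
        rw [← Matrix.mul_assoc Bᴴ, ← hB, ← Matrix.mul_assoc,
          mul_nonsing_inv _ (isUnit_det_of_mul_mul_conjTranspose_eq_one hQX), Matrix.one_mul]
    _ = 0 := by rw [h, Matrix.mul_zero, Matrix.mul_zero]

end Matrix

/-- `{S^{-1/2} Tⱼ}` is the Parseval generalized frame closest (in the Hilbert–Schmidt
distance) to a given generalized frame `{Tⱼ}`, with equality iff `Rⱼ = S^{-1/2} Tⱼ`. -/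
theorem closest_parseval_frame
    {𝕜 : Type*} [RCLike 𝕜] {d r n : ℕ}
    (T R : Fin n → Matrix (Fin d) (Fin r) 𝕜)
    (hframe : ∃ A B : ℝ, 0 < A ∧ A ≤ B ∧ ∀ x : Fin d → 𝕜,
        A * ∑ i, ‖x i‖ ^ 2 ≤ ∑ j, ∑ i, ‖((T j)ᴴ.mulVec x) i‖ ^ 2 ∧
        ∑ j, ∑ i, ‖((T j)ᴴ.mulVec x) i‖ ^ 2 ≤ B * ∑ i, ‖x i‖ ^ 2)
    (Q : Matrix (Fin d) (Fin d) 𝕜) (hQ : Q.PosSemidef)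
    (hQsq : Q * Q = (∑ j, T j * (T j)ᴴ)⁻¹)
    (hR : ∑ j, R j * (R j)ᴴ = 1) :
    (∑ j, ∑ i, ∑ l, ‖(T j - Q * T j) i l‖ ^ 2) ≤
        ∑ j, ∑ i, ∑ l, ‖(T j - R j) i l‖ ^ 2 ∧
      ((∑ j, ∑ i, ∑ l, ‖(T j - Q * T j) i l‖ ^ 2) =
          (∑ j, ∑ i, ∑ l, ‖(T j - R j) i l‖ ^ 2) ↔ ∀ j, R j = Q * T j) := by
  obtain ⟨A, _, hA, -, hbound⟩ := hframe
  set X := synthesisMatrix T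
  have hS : X * Xᴴ = ∑ j, T j * (T j)ᴴ := synthesisMatrix_mul_conjTranspose T
  have hSunit : IsUnit (X * Xᴴ).det := (isUnit_iff_isUnit_det _).mp <|
    isUnit_mul_conjTranspose_of_lower_bound hA fun x => by
      rw [Fintype.sum_prod_type]
      exact (hbound x).1
  have hQX : Q * X * (Q * X)ᴴ = 1 :=
    mul_mul_conjTranspose_eq_one_of_mul_self_eq_inv hQ.1 hSunit (by rwa [hS])
  have hY : synthesisMatrix R * (synthesisMatrix R)ᴴ = 1 := by
    rw [synthesisMatrix_mul_conjTranspose, hR]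
  have hsum (T' : Fin n → Matrix (Fin d) (Fin r) 𝕜) :
      ∑ j, ∑ i, ∑ l, ‖(T j - T' j) i l‖ ^ 2 = hsNormSq (X - synthesisMatrix T') := by
    rw [← synthesisMatrix_sub, hsNormSq_synthesisMatrix]
    rfl
  have hfamily : (∀ j, R j = Q * T j) ↔ synthesisMatrix R = Q * X := by
    rw [mul_synthesisMatrix, synthesisMatrix_injective.eq_iff, funext_iff]
  rw [hsum, hsum, ← mul_synthesisMatrix, hfamily]
  exact hsNormSq_sub_mul_le_and_eq_iff hQ hQX hY
end

section
/- Let M_k = M(Γ_k) be the matrices arising in the iteration Γ_{k+1} = Γ_k^{1/2} M_k^{-1} Γ_k^{1/2} / trace(Γ_k M_k^{-1}) starting from Γ_0 = (1/d)I_d, where M(Γ) = (d/n) Σ_j (Γ^{1/2}T_jT_j*Γ^{1/2})/trace(T_j*ΓT_j) for a generalized frame {T_j}_{j=1}^n with all T_j ≠ 0. Then the smallest eigenvalues λ_{d,k} of M_k form a nondecreasing sequence and the largest eigenvalues λ_{1,k} of M_k form a nonincreasing sequence in k. -/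
/-!
Write `M(Γ) = Γ^{1/2} Q(Γ) Γ^{1/2}` with `Q(Γ) = (d/n) ∑ⱼ Tⱼ Tⱼᴴ / tr(Tⱼᴴ Γ Tⱼ)`
(`weightedFrameOperator`). The iteration then reads `Γ_{k+1} = ρ⁻¹ Q(Γ_k)⁻¹` with
`ρ = tr(Q(Γ_k)⁻¹)`, so that `Γ_{k+1}^{1/2} Q(Γ_k) Γ_{k+1}^{1/2} = ρ⁻¹ I`.
If `λ I ≤ M_k`, then `M_k⁻¹ ≤ λ⁻¹ I`, hence `Γ_{k+1} ≤ (λρ)⁻¹ Γ_k`. This bounds every trace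
`tr(Tⱼᴴ Γ_{k+1} Tⱼ)` from above, so `λρ Q(Γ_k) ≤ Q(Γ_{k+1})`, and conjugating by `Γ_{k+1}^{1/2}`
gives `λ I ≤ M_{k+1}`. The upper bound is symmetric.
-/

open scoped ComplexOrder MatrixOrder
open Matrix

namespace Matrix

variable {𝕜 m κ ι : Type*} [RCLike 𝕜] [Fintype m] [Fintype κ] [Fintype ι]

lemma conjTranspose_mul_mul_le_of_le {A B : Matrix m m 𝕜} (h : A ≤ B) (C : Matrix m κ 𝕜) :
    Cᴴ * A * C ≤ Cᴴ * B * C := by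
  rw [le_iff, ← Matrix.sub_mul, ← Matrix.mul_sub]
  exact (le_iff.mp h).conjTranspose_mul_mul_same C

lemma trace_le_trace_of_le {A B : Matrix m m 𝕜} (h : A ≤ B) : A.trace ≤ B.trace := by
  simpa [trace_sub] using (le_iff.mp h).trace_nonneg

lemma PosDef.trace_conjTranspose_mul_mul_pos {Γ : Matrix m m 𝕜} (hΓ : Γ.PosDef)
    {T : Matrix m κ 𝕜} (hT : T ≠ 0) : 0 < (Tᴴ * Γ * T).trace := by
  have hpsd := hΓ.posSemidef.conjTranspose_mul_mul_same T
  refine hpsd.trace_nonneg.lt_of_ne' fun htr => hT (ext_iff_mulVec.mpr fun v => ?_)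
  have hquad : star (T *ᵥ v) ⬝ᵥ Γ *ᵥ (T *ᵥ v) = 0 := by
    rw [star_mulVec, ← dotProduct_mulVec, mulVec_mulVec, mulVec_mulVec,
      hpsd.trace_eq_zero_iff.mp htr, zero_mulVec, dotProduct_zero]
  rw [zero_mulVec]
  by_contra hv
  exact (hΓ.dotProduct_mulVec_pos hv).ne' hquad

lemma posDef_sum_smul_mul_conjTranspose {T : ι → Matrix m κ 𝕜} {w : ι → 𝕜}
    (hw : ∀ j, 0 < w j) (hspan : ∀ x, (∀ j, (T j)ᴴ *ᵥ x = 0) → x = 0) :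
    (∑ j, w j • (T j * (T j)ᴴ)).PosDef := by
  have hquad : ∀ j x, star x ⬝ᵥ (T j * (T j)ᴴ) *ᵥ x = star ((T j)ᴴ *ᵥ x) ⬝ᵥ (T j)ᴴ *ᵥ x := by
    intro j x
    rw [← mulVec_mulVec, dotProduct_mulVec, star_mulVec, conjTranspose_conjTranspose]
  have hpsd : (∑ j, w j • (T j * (T j)ᴴ)).PosSemidef :=
    posSemidef_sum _ fun j _ => (posSemidef_self_mul_conjTranspose (T j)).smul (hw j).le
  refine PosDef.of_dotProduct_mulVec_pos hpsd.1 fun x hx => ?_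
  obtain ⟨j, hj⟩ : ∃ j, (T j)ᴴ *ᵥ x ≠ 0 := by
    by_contra! h
    exact hx (hspan x h)
  simp only [sum_mulVec, dotProduct_sum, smul_mulVec, dotProduct_smul, smul_eq_mul, hquad]
  exact Finset.sum_pos' (fun i _ => mul_nonneg (hw i).le (dotProduct_star_self_nonneg _))
    ⟨j, Finset.mem_univ _, mul_pos (hw j) (dotProduct_star_self_pos_iff.mpr hj)⟩

variable [DecidableEq m]

lemma algebraMap_real_eq_smul_one (c : ℝ) : algebraMap ℝ (Matrix m m 𝕜) c = (c : 𝕜) • 1 := by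
  rw [Algebra.algebraMap_eq_smul_one, RCLike.real_smul_eq_coe_smul (K := 𝕜)]

lemma IsHermitian.smul_one_le_iff {A : Matrix m m 𝕜} (hA : A.IsHermitian) {c : ℝ} :
    (c : 𝕜) • 1 ≤ A ↔ ∀ i, c ≤ hA.eigenvalues i := by
  rw [← algebraMap_real_eq_smul_one, algebraMap_le_iff_le_spectrum hA.isSelfAdjoint,
    hA.spectrum_real_eq_range_eigenvalues, Set.forall_mem_range]

lemma IsHermitian.le_smul_one_iff {A : Matrix m m 𝕜} (hA : A.IsHermitian) {c : ℝ} :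
    A ≤ (c : 𝕜) • 1 ↔ ∀ i, hA.eigenvalues i ≤ c := by
  rw [← algebraMap_real_eq_smul_one, le_algebraMap_iff_spectrum_le hA.isSelfAdjoint,
    hA.spectrum_real_eq_range_eigenvalues, Set.forall_mem_range]

lemma IsHermitian.smul_one_iInf_eigenvalues_le {A : Matrix m m 𝕜} (hA : A.IsHermitian) :
    ((⨅ i, hA.eigenvalues i : ℝ) : 𝕜) • 1 ≤ A :=
  hA.smul_one_le_iff.mpr fun i => ciInf_le (Set.finite_range _).bddBelow i

lemma IsHermitian.le_smul_one_iSup_eigenvalues {A : Matrix m m 𝕜} (hA : A.IsHermitian) :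
    A ≤ ((⨆ i, hA.eigenvalues i : ℝ) : 𝕜) • 1 :=
  hA.le_smul_one_iff.mpr fun i => le_ciSup (Set.finite_range _).bddAbove i

lemma PosDef.iInf_eigenvalues_pos [Nonempty m] {A : Matrix m m 𝕜} (hA : A.PosDef) :
    0 < ⨅ i, hA.1.eigenvalues i := by
  obtain ⟨i, hi⟩ := exists_eq_ciInf_of_finite (f := hA.1.eigenvalues)
  exact hi ▸ hA.eigenvalues_pos i

lemma PosDef.iSup_eigenvalues_pos [Nonempty m] {A : Matrix m m 𝕜} (hA : A.PosDef) :
    0 < ⨆ i, hA.1.eigenvalues i :=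
  hA.iInf_eigenvalues_pos.trans_le
    (ciInf_le_ciSup (Set.finite_range _).bddBelow (Set.finite_range _).bddAbove)

lemma PosDef.inv_le_smul_one {A : Matrix m m 𝕜} (hA : A.PosDef) {c : ℝ} (hc : 0 < c)
    (h : (c : 𝕜) • 1 ≤ A) : A⁻¹ ≤ (c⁻¹ : 𝕜) • 1 := by
  have hsa : IsSelfAdjoint A := hA.1
  rw [← algebraMap_real_eq_smul_one, algebraMap_le_iff_le_spectrum hsa] at h
  rw [← RCLike.ofReal_inv, ← algebraMap_real_eq_smul_one]
  lift A to (Matrix m m 𝕜)ˣ using hA.isUnit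
  rw [← coe_units_inv, ← cfc_inv_id (R := ℝ) A hsa, cfc_le_algebraMap_iff (· ⁻¹) c⁻¹ _
    (continuousOn_inv₀.mono fun x hx => (hc.trans_le (h x hx)).ne') hsa]
  exact fun x hx => inv_anti₀ hc (h x hx)

lemma PosDef.smul_one_le_inv {A : Matrix m m 𝕜} (hA : A.PosDef) {c : ℝ}
    (h : A ≤ (c : 𝕜) • 1) : (c⁻¹ : 𝕜) • 1 ≤ A⁻¹ := by
  have hsa : IsSelfAdjoint A := hA.1
  have hpos : ∀ x ∈ spectrum ℝ A, 0 < x := fun x hx => hA.isStrictlyPositive.spectrum_pos hx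
  rw [← algebraMap_real_eq_smul_one, le_algebraMap_iff_spectrum_le hsa] at h
  rw [← RCLike.ofReal_inv, ← algebraMap_real_eq_smul_one]
  lift A to (Matrix m m 𝕜)ˣ using hA.isUnit
  rw [← coe_units_inv, ← cfc_inv_id (R := ℝ) A hsa, algebraMap_le_cfc_iff (· ⁻¹) c⁻¹ _
    (continuousOn_inv₀.mono fun x hx => (hpos x hx).ne') hsa]
  exact fun x hx => inv_anti₀ (hpos x hx) (h x hx)

lemma mul_inv_conj_mul_eq_inv {P : Matrix m m 𝕜} (hP : IsUnit P) (X : Matrix m m 𝕜) :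
    P * (P * X * P)⁻¹ * P = X⁻¹ := by
  have hdet : IsUnit P.det := (isUnit_iff_isUnit_det P).mp hP
  rw [mul_inv_rev, mul_inv_rev, ← mul_assoc, ← mul_assoc, mul_nonsing_inv _ hdet, one_mul,
    mul_assoc, nonsing_inv_mul _ hdet, mul_one]

lemma PosDef.inv_trace_inv_smul_inv [Nonempty m] {Q : Matrix m m 𝕜} (hQ : Q.PosDef) :
    (Q⁻¹.trace⁻¹ • Q⁻¹).PosDef :=
  hQ.inv.smul (inv_pos.mpr hQ.inv.trace_pos)

lemma conj_eq_smul_one_of_mul_self_eq {P Q : Matrix m m 𝕜} (hQ : Q.PosDef) {ρ : 𝕜} (hρ : 0 < ρ)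
    (h : P * P = ρ⁻¹ • Q⁻¹) : P * Q * P = ρ⁻¹ • 1 := by
  have hP : IsUnit P := isUnit_of_mul_isUnit_left (h ▸ (hQ.inv.smul (inv_pos.mpr hρ)).isUnit)
  have hinv : (P * P)⁻¹ = ρ • Q := by
    refine inv_eq_left_inv ?_
    rw [h, smul_mul_smul_comm, mul_inv_cancel₀ hρ.ne', one_smul,
      mul_nonsing_inv _ ((isUnit_iff_isUnit_det Q).mp hQ.isUnit)]
  have hconj := mul_inv_conj_mul_eq_inv hP 1
  rw [mul_one, hinv, inv_one, mul_smul_comm, smul_mul_assoc] at hconj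
  rw [← hconj, smul_smul, inv_mul_cancel₀ hρ.ne', one_smul]

lemma PosDef.mul_mul_of_isHermitian {P Q : Matrix m m 𝕜} (hQ : Q.PosDef) (hP : P.IsHermitian)
    (hPu : IsUnit P) : (P * Q * P).PosDef := by
  simpa only [star_eq_conjTranspose, hP.eq] using (hPu.posDef_star_left_conjugate_iff).mpr hQ

lemma inv_le_smul_mul_self_of_smul_one_le_conj {P Q : Matrix m m 𝕜} (hQ : Q.PosDef)
    (hP : P.IsHermitian) (hPu : IsUnit P) {a : ℝ} (ha : 0 < a) (h : (a : 𝕜) • 1 ≤ P * Q * P) :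
    Q⁻¹ ≤ (a : 𝕜)⁻¹ • (P * P) := by
  simpa only [hP.eq, mul_inv_conj_mul_eq_inv hPu, mul_smul_comm, smul_mul_assoc, mul_one] using
    conjTranspose_mul_mul_le_of_le ((hQ.mul_mul_of_isHermitian hP hPu).inv_le_smul_one ha h) P

lemma smul_mul_self_le_inv_of_conj_le_smul_one {P Q : Matrix m m 𝕜} (hQ : Q.PosDef)
    (hP : P.IsHermitian) (hPu : IsUnit P) {b : ℝ} (h : P * Q * P ≤ (b : 𝕜) • 1) :
    (b : 𝕜)⁻¹ • (P * P) ≤ Q⁻¹ := by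
  simpa only [hP.eq, mul_inv_conj_mul_eq_inv hPu, mul_smul_comm, smul_mul_assoc, mul_one] using
    conjTranspose_mul_mul_le_of_le ((hQ.mul_mul_of_isHermitian hP hPu).smul_one_le_inv h) P

end Matrix

section WeightedFrameOperator

variable {𝕜 m κ ι : Type*} [RCLike 𝕜] [Fintype m] [Fintype κ] [Fintype ι]

noncomputable def weightedFrameOperator (c : ℝ) (T : ι → Matrix m κ 𝕜) (Γ : Matrix m m 𝕜) :
    Matrix m m 𝕜 :=
  (c : 𝕜) • ∑ j, ((T j)ᴴ * Γ * T j).trace⁻¹ • (T j * (T j)ᴴ)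

variable {c : ℝ} {T : ι → Matrix m κ 𝕜}

lemma mul_weightedFrameOperator_mul (Γ P : Matrix m m 𝕜) :
    P * weightedFrameOperator c T Γ * P =
      (c : 𝕜) • ∑ j, ((T j)ᴴ * Γ * T j).trace⁻¹ • (P * T j * (T j)ᴴ * P) := by
  simp only [weightedFrameOperator, smul_mul_assoc, mul_smul_comm, Finset.mul_sum,
    Finset.sum_mul, Matrix.mul_assoc]

lemma weightedFrameOperator_posDef (hc : 0 < c) (hT : ∀ j, T j ≠ 0)
    (hspan : ∀ x, (∀ j, (T j)ᴴ *ᵥ x = 0) → x = 0) {Γ : Matrix m m 𝕜} (hΓ : Γ.PosDef) :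
    (weightedFrameOperator c T Γ).PosDef :=
  (posDef_sum_smul_mul_conjTranspose
    (fun j => inv_pos.mpr (hΓ.trace_conjTranspose_mul_mul_pos (hT j))) hspan).smul
    (RCLike.ofReal_pos.mpr hc)

lemma smul_weightedFrameOperator_le (hc : 0 ≤ c) (hT : ∀ j, T j ≠ 0) {Γ Γ' : Matrix m m 𝕜}
    (hΓ' : Γ'.PosDef) {t : 𝕜} (h : Γ' ≤ t • Γ) :
    t⁻¹ • weightedFrameOperator c T Γ ≤ weightedFrameOperator c T Γ' := by
  rw [weightedFrameOperator, weightedFrameOperator, smul_comm, Finset.smul_sum]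
  refine smul_le_smul_of_nonneg_left (Finset.sum_le_sum fun j _ => ?_)
    (RCLike.ofReal_nonneg.mpr hc)
  rw [smul_smul, ← mul_inv]
  refine smul_le_smul_of_nonneg_right (inv_anti₀ (hΓ'.trace_conjTranspose_mul_mul_pos (hT j)) ?_)
    (posSemidef_self_mul_conjTranspose (T j)).nonneg
  simpa [mul_smul_comm, smul_mul_assoc, trace_smul] using
    trace_le_trace_of_le (conjTranspose_mul_mul_le_of_le h (T j))

variable [DecidableEq m] [Nonempty m] {Γ Γ' P P' : Matrix m m 𝕜}

lemma smul_one_le_conj_weightedFrameOperator_succ (hc : 0 ≤ c) (hT : ∀ j, T j ≠ 0)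
    (hΓ : Γ.PosDef) (hP : P.IsHermitian) (hPP : P * P = Γ)
    (hQ : (weightedFrameOperator c T Γ).PosDef)
    (hΓ' : Γ' = (weightedFrameOperator c T Γ)⁻¹.trace⁻¹ • (weightedFrameOperator c T Γ)⁻¹)
    (hP' : P'.IsHermitian) (hPP' : P' * P' = Γ') {a : ℝ} (ha : 0 < a)
    (h : (a : 𝕜) • 1 ≤ P * weightedFrameOperator c T Γ * P) :
    (a : 𝕜) • 1 ≤ P' * weightedFrameOperator c T Γ' * P' := by
  set Q := weightedFrameOperator c T Γ
  set ρ := Q⁻¹.trace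
  have hρ : 0 < ρ := hQ.inv.trace_pos
  have hPu : IsUnit P := isUnit_of_mul_isUnit_left (hPP ▸ hΓ.isUnit)
  have hQinv : Q⁻¹ ≤ (a : 𝕜)⁻¹ • Γ :=
    hPP ▸ inv_le_smul_mul_self_of_smul_one_le_conj hQ hP hPu ha h
  have hΓ'le : Γ' ≤ ((a : 𝕜) * ρ)⁻¹ • Γ := by
    rw [hΓ', mul_inv, mul_comm, mul_smul]
    exact smul_le_smul_of_nonneg_left hQinv (inv_pos.mpr hρ).le
  have hP'QP' : P' * Q * P' = ρ⁻¹ • 1 :=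
    conj_eq_smul_one_of_mul_self_eq hQ hρ (hPP'.trans hΓ')
  calc (a : 𝕜) • 1 = P'ᴴ * (((a : 𝕜) * ρ)⁻¹⁻¹ • Q) * P' := by
        rw [inv_inv, hP'.eq, mul_smul_comm, smul_mul_assoc, hP'QP', smul_smul, mul_assoc,
          mul_inv_cancel₀ hρ.ne', mul_one]
    _ ≤ P'ᴴ * weightedFrameOperator c T Γ' * P' :=
        conjTranspose_mul_mul_le_of_le
          (smul_weightedFrameOperator_le hc hT (hΓ' ▸ hQ.inv_trace_inv_smul_inv) hΓ'le) P'
    _ = P' * weightedFrameOperator c T Γ' * P' := by rw [hP'.eq]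

lemma conj_weightedFrameOperator_succ_le_smul_one (hc : 0 ≤ c) (hT : ∀ j, T j ≠ 0)
    (hΓ : Γ.PosDef) (hP : P.IsHermitian) (hPP : P * P = Γ)
    (hQ : (weightedFrameOperator c T Γ).PosDef)
    (hΓ' : Γ' = (weightedFrameOperator c T Γ)⁻¹.trace⁻¹ • (weightedFrameOperator c T Γ)⁻¹)
    (hP' : P'.IsHermitian) (hPP' : P' * P' = Γ') {b : ℝ} (hb : 0 < b)
    (h : P * weightedFrameOperator c T Γ * P ≤ (b : 𝕜) • 1) :
    P' * weightedFrameOperator c T Γ' * P' ≤ (b : 𝕜) • 1 := by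
  set Q := weightedFrameOperator c T Γ
  set ρ := Q⁻¹.trace
  have hρ : 0 < ρ := hQ.inv.trace_pos
  have hb' : (0 : 𝕜) < b := RCLike.ofReal_pos.mpr hb
  have hPu : IsUnit P := isUnit_of_mul_isUnit_left (hPP ▸ hΓ.isUnit)
  have hQinv : (b : 𝕜)⁻¹ • Γ ≤ Q⁻¹ :=
    hPP ▸ smul_mul_self_le_inv_of_conj_le_smul_one hQ hP hPu h
  have hΓle : Γ ≤ ((b : 𝕜) * ρ) • Γ' := by
    rw [hΓ', smul_smul, mul_assoc, mul_inv_cancel₀ hρ.ne', mul_one]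
    calc Γ = (b : 𝕜) • (b : 𝕜)⁻¹ • Γ := by rw [smul_smul, mul_inv_cancel₀ hb'.ne', one_smul]
      _ ≤ (b : 𝕜) • Q⁻¹ := smul_le_smul_of_nonneg_left hQinv hb'.le
  have hP'QP' : P' * Q * P' = ρ⁻¹ • 1 :=
    conj_eq_smul_one_of_mul_self_eq hQ hρ (hPP'.trans hΓ')
  have hbρ : (0 : 𝕜) < b * ρ := mul_pos hb' hρ
  calc P' * weightedFrameOperator c T Γ' * P'
      = P'ᴴ * (((b : 𝕜) * ρ) • ((b : 𝕜) * ρ)⁻¹ • weightedFrameOperator c T Γ') * P' := by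
        rw [smul_smul, mul_inv_cancel₀ hbρ.ne', one_smul, hP'.eq]
    _ ≤ P'ᴴ * (((b : 𝕜) * ρ) • Q) * P' :=
        conjTranspose_mul_mul_le_of_le (smul_le_smul_of_nonneg_left
          (smul_weightedFrameOperator_le hc hT hΓ hΓle) hbρ.le) P'
    _ = (b : 𝕜) • 1 := by
        rw [hP'.eq, mul_smul_comm, smul_mul_assoc, hP'QP', smul_smul, mul_assoc,
          mul_inv_cancel₀ hρ.ne', mul_one]

end WeightedFrameOperator

lemma eq_zero_of_forall_conjTranspose_mulVec_eq_zero {𝕜 m κ ι : Type*} [RCLike 𝕜] [Fintype m]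
    [Fintype κ] [Fintype ι] {T : ι → Matrix m κ 𝕜} {A : ℝ} (hA : 0 < A)
    (hframe : ∀ x : m → 𝕜, A * ∑ i, ‖x i‖ ^ 2 ≤ ∑ j, ∑ i, ‖((T j)ᴴ *ᵥ x) i‖ ^ 2)
    {x : m → 𝕜} (hx : ∀ j, (T j)ᴴ *ᵥ x = 0) : x = 0 := by
  have hsum : ∑ i, ‖x i‖ ^ 2 ≤ 0 :=
    nonpos_of_mul_nonpos_right (by simpa [hx] using hframe x) hA
  funext i
  simpa using (Finset.sum_eq_zero_iff_of_nonneg fun i _ => sq_nonneg ‖x i‖).mp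
    (hsum.antisymm (Finset.sum_nonneg fun i _ => sq_nonneg _)) i (Finset.mem_univ i)

/-- In the iteration `Γ_{k+1} = Γ_k^{1/2} M_k⁻¹ Γ_k^{1/2} / trace(Γ_k M_k⁻¹)` with
`Γ_0 = (1/d) I` and `M_k = M(Γ_k) = (d/n) ∑ⱼ Γ_k^{1/2} Tⱼ Tⱼᴴ Γ_k^{1/2} / trace(Tⱼᴴ Γ_k Tⱼ)`,
the smallest eigenvalues of `M_k` form a nondecreasing sequence and the largest
eigenvalues of `M_k` form a nonincreasing sequence. -/
theorem eigenvalue_monotonicity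
    {𝕜 : Type*} [RCLike 𝕜] {d r n : ℕ} (hd : 0 < d) (hn : 0 < n)
    (T : Fin n → Matrix (Fin d) (Fin r) 𝕜)
    (hframe : ∃ A B : ℝ, 0 < A ∧ A ≤ B ∧ ∀ x : Fin d → 𝕜,
        A * ∑ i, ‖x i‖ ^ 2 ≤ ∑ j, ∑ i, ‖((T j)ᴴ.mulVec x) i‖ ^ 2 ∧
        ∑ j, ∑ i, ‖((T j)ᴴ.mulVec x) i‖ ^ 2 ≤ B * ∑ i, ‖x i‖ ^ 2)
    (hT : ∀ j, T j ≠ 0)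
    (Γ M P : ℕ → Matrix (Fin d) (Fin d) 𝕜)
    (hΓ0 : Γ 0 = ((d : 𝕜))⁻¹ • (1 : Matrix (Fin d) (Fin d) 𝕜))
    (hPsd : ∀ k, (P k).PosSemidef) (hPsq : ∀ k, P k * P k = Γ k)
    (hM : ∀ k, M k = (((d : ℝ) / n : ℝ) : 𝕜) •
        ∑ j, (Matrix.trace ((T j)ᴴ * Γ k * T j))⁻¹ • (P k * T j * (T j)ᴴ * P k))
    (hrec : ∀ k, Γ (k + 1) =
        (Matrix.trace (Γ k * (M k)⁻¹))⁻¹ • (P k * (M k)⁻¹ * P k))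
    (hH : ∀ k, (M k).IsHermitian) :
    Monotone (fun k => ⨅ i, (hH k).eigenvalues i) ∧
      Antitone (fun k => ⨆ i, (hH k).eigenvalues i) := by
  have : Nonempty (Fin d) := ⟨⟨0, hd⟩⟩
  have hc : (0 : ℝ) < d / n := by positivity
  obtain ⟨A, _, hA, _, hAT⟩ := hframe
  have hspan : ∀ x, (∀ j, (T j)ᴴ *ᵥ x = 0) → x = 0 := fun x =>
    eq_zero_of_forall_conjTranspose_mulVec_eq_zero hA fun y => (hAT y).1
  set Q := fun k => weightedFrameOperator ((d : ℝ) / n) T (Γ k)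
  have hQ : ∀ k, (Γ k).PosDef → (Q k).PosDef := fun k => weightedFrameOperator_posDef hc hT hspan
  have hMQ : ∀ k, M k = P k * Q k * P k := fun k => by rw [hM k, mul_weightedFrameOperator_mul]
  have hPu : ∀ k, (Γ k).PosDef → IsUnit (P k) := fun k hk =>
    isUnit_of_mul_isUnit_left ((hPsq k).symm ▸ hk.isUnit)
  have hnext : ∀ k, (Γ k).PosDef → Γ (k + 1) = (Q k)⁻¹.trace⁻¹ • (Q k)⁻¹ := fun k hk => by
    rw [hrec k, hMQ k, ← hPsq k, ← trace_mul_cycle (P k) _ (P k),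
      mul_inv_conj_mul_eq_inv (hPu k hk)]
  have hΓ : ∀ k, (Γ k).PosDef := by
    intro k
    induction k with
    | zero => exact hΓ0 ▸ PosDef.one.smul (inv_pos.mpr (by exact_mod_cast hd))
    | succ k ih => exact (hnext k ih).symm ▸ (hQ k ih).inv_trace_inv_smul_inv
  have hstep : ∀ k, ((⨅ i, (hH k).eigenvalues i : ℝ) : 𝕜) • 1 ≤ M (k + 1) ∧
      M (k + 1) ≤ ((⨆ i, (hH k).eigenvalues i : ℝ) : 𝕜) • 1 := by
    intro k
    have hMk : (M k).PosDef :=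
      hMQ k ▸ (hQ k (hΓ k)).mul_mul_of_isHermitian (hPsd k).1 (hPu k (hΓ k))
    rw [hMQ (k + 1)]
    constructor
    · exact smul_one_le_conj_weightedFrameOperator_succ hc.le hT (hΓ k) (hPsd k).1 (hPsq k)
        (hQ k (hΓ k)) (hnext k (hΓ k)) (hPsd (k + 1)).1 (hPsq (k + 1)) hMk.iInf_eigenvalues_pos
        ((hH k).smul_one_iInf_eigenvalues_le.trans_eq (hMQ k))
    · exact conj_weightedFrameOperator_succ_le_smul_one hc.le hT (hΓ k) (hPsd k).1 (hPsq k)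
        (hQ k (hΓ k)) (hnext k (hΓ k)) (hPsd (k + 1)).1 (hPsq (k + 1)) hMk.iSup_eigenvalues_pos
        ((hMQ k).symm.trans_le (hH k).le_smul_one_iSup_eigenvalues)
  exact ⟨monotone_nat_of_le_succ fun k =>
      le_ciInf fun i => (hH (k + 1)).smul_one_le_iff.mp (hstep k).1 i,
    antitone_nat_of_succ_le fun k =>
      ciSup_le fun i => (hH (k + 1)).le_smul_one_iff.mp (hstep k).2 i⟩
end
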